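/- Let A > 4 and let an interval [t₁', At₁'] ⊂ (0,∞) be covered by at most two consecutive intervals from a finite partition {J̃_j} of a larger interval into consecutive subintervals. Then there exists an index j such that |J̃_j| ≥ (√A/2)|J̃_{j-1}|. -/

import Mathlib

/-!
With `s = √A ≥ 2`, split on where the middle endpoint `τ j` lies. If `τ j ≤ s t'`, then
`J̃_{j+1}` has length at least `(s² - s) t'` while `J̃_j ⊆ [0, s t']`; otherwise `J̃_j` has length
at least `(s - 1) t'` while `J̃_{j-1} ⊆ [0, t']`. Both ratios are at least `s / 2` because `s ≥ 2`.
-/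

section GapGrowth

variable {s t a b c d : ℝ}

lemma gap_growth_right_of_le (hs : 2 ≤ s) (ht : 0 ≤ t) (hb : 0 ≤ b) (hd : s ^ 2 * t ≤ d)
    (hc : c ≤ s * t) : s / 2 * (c - b) ≤ d - c :=
  calc s / 2 * (c - b) ≤ s / 2 * (s * t) := by gcongr; linarith
    _ ≤ s ^ 2 * t - s * t := by
      nlinarith [mul_nonneg (mul_nonneg (zero_le_two.trans hs) ht) (sub_nonneg.2 hs)]
    _ ≤ d - c := by linarith

lemma gap_growth_left_of_lt (hs : 2 ≤ s) (ht : 0 ≤ t) (ha : 0 ≤ a) (hbt : b ≤ t)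
    (hc : s * t < c) : s / 2 * (b - a) ≤ c - b :=
  calc s / 2 * (b - a) ≤ s / 2 * t := by gcongr; linarith
    _ ≤ (s - 1) * t := by nlinarith
    _ ≤ c - b := by linarith

lemma gap_growth_of_two_cover (hs : 2 ≤ s) (ha : 0 ≤ a) (hab : a ≤ b) (hbt : b ≤ t)
    (hd : s ^ 2 * t ≤ d) : s / 2 * (b - a) ≤ c - b ∨ s / 2 * (c - b) ≤ d - c := by
  have ht : 0 ≤ t := by linarith
  rcases le_or_gt c (s * t) with hc | hc
  · exact .inr (gap_growth_right_of_le hs ht (by linarith) hd hc)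
  · exact .inl (gap_growth_left_of_lt hs ht ha hbt hc)

end GapGrowth

theorem stmt15_general (A t' : ℝ) (hA : 4 < A)
    (τ : ℕ → ℝ) (hτ : Monotone τ) (hτ0 : 0 ≤ τ 0)
    (j : ℕ) (hj : 2 ≤ j) (hcov₁ : τ (j - 1) ≤ t') (hcov₂ : A * t' ≤ τ (j + 1)) :
    ∃ i : ℕ, 1 ≤ i ∧
      τ (i + 1) - τ i ≥ (Real.sqrt A / 2) * (τ i - τ (i - 1)) := by
  have hs : 2 ≤ √A := Real.le_sqrt_of_sq_le (by linarith)
  have hd : √A ^ 2 * t' ≤ τ (j + 1) := by rwa [Real.sq_sqrt (by linarith)]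
  have ha : 0 ≤ τ (j - 1 - 1) := hτ0.trans (hτ (Nat.zero_le _))
  have hj' : j - 1 + 1 = j := by omega
  rcases gap_growth_of_two_cover (c := τ j) hs ha (hτ (by omega)) hcov₁ hd with h | h
  · exact ⟨j - 1, by omega, by rwa [hj']⟩
  · exact ⟨j, by omega, h⟩

/-- Combinatorial length comparison: let `A > 4`, `t' > 0`, and let
`τ : ℕ → ℝ` be the nondecreasing endpoints (with `τ 0 ≥ 0`) of consecutive intervals
`J̃_i = [τ (i-1), τ i]`. If `[t', A t']` is covered by at most two consecutive intervals
`J̃_j ∪ J̃_{j+1}` (i.e. `τ (j-1) ≤ t'` and `A t' ≤ τ (j+1)` for some `j ≥ 2`), then some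
interval satisfies `|J̃_{i+1}| ≥ (√A/2) |J̃_i|`. -/
theorem stmt15 (A t' : ℝ) (hA : 4 < A) (ht' : 0 < t')
    (τ : ℕ → ℝ) (hτ : Monotone τ) (hτ0 : 0 ≤ τ 0)
    (j : ℕ) (hj : 2 ≤ j) (hcov₁ : τ (j - 1) ≤ t') (hcov₂ : A * t' ≤ τ (j + 1)) :
    ∃ i : ℕ, 1 ≤ i ∧
      τ (i + 1) - τ i ≥ (Real.sqrt A / 2) * (τ i - τ (i - 1)) :=
  stmt15_general A t' hA τ hτ hτ0 j hj hcov₁ hcov₂
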